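/- Let L ∈ ℝ^{n₁×r} and R ∈ ℝ^{n₂×r} both have full column rank r, with SVDs L = U_L Σ_L V_Lᵀ and R = U_R Σ_R V_Rᵀ (V_L, V_R orthogonal r×r). Then the operator norm satisfies ‖L(LᵀL)⁻¹(RᵀR)⁻¹Rᵀ‖ = 1/σ_r(LRᵀ), where σ_r denotes the r-th largest singular value. -/

import Mathlib

open Matrix Finset

/-- Euclidean norm of a vector. -/
noncomputable def enorm₂ {ι : Type*} [Fintype ι] (x : ι → ℝ) : ℝ :=
  Real.sqrt (∑ i, x i ^ 2)

/-- Frobenius norm of a matrix. -/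
noncomputable def frob {ι κ : Type*} [Fintype ι] [Fintype κ] (A : Matrix ι κ ℝ) : ℝ :=
  Real.sqrt (∑ i, ∑ j, A i j ^ 2)

/-- Matrix inner product ⟨A,B⟩ = Tr(AᵀB). -/
noncomputable def minner {ι κ : Type*} [Fintype ι] [Fintype κ] (A B : Matrix ι κ ℝ) : ℝ :=
  ∑ i, ∑ j, A i j * B i j

/-- The k-th largest singular value, via the Courant–Fischer max-min characterization. -/
noncomputable def sval {ι κ : Type*} [Fintype ι] [Fintype κ] (A : Matrix ι κ ℝ) (k : ℕ) : ℝ :=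
  sSup {t : ℝ | ∃ V : Submodule ℝ (κ → ℝ), Module.finrank ℝ V = k ∧
    ∀ x ∈ V, t * enorm₂ x ≤ enorm₂ (A.mulVec x)}

/-- Spectral (operator) norm = largest singular value. -/
noncomputable def spec {ι κ : Type*} [Fintype ι] [Fintype κ] (A : Matrix ι κ ℝ) : ℝ :=
  sval A 1

/-
Factor `L = U S` and `R = W T` with `U`, `W` having orthonormal columns and `S`, `T` invertible
(from `LᵀL = SᵀS`, `RᵀR = TᵀT`). With `C = S Tᵀ` this gives `L Rᵀ = U C Wᵀ` and
`L (LᵀL)⁻¹ (RᵀR)⁻¹ Rᵀ = U (C⁻¹)ᵀ Wᵀ`. Multiplying by `U` on the left and `Wᵀ` on the right changes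
neither the operator norm nor the `r`-th singular value, so everything reduces to the square
invertible `C`, whose smallest singular value is `‖C⁻¹‖⁻¹`.
-/

open scoped Matrix.Norms.L2Operator

section
variable {ι κ μ : Type*} [Fintype ι] [Fintype κ] [Fintype μ]

lemma enorm₂_eq_norm_toLp (x : κ → ℝ) : enorm₂ x = ‖WithLp.toLp 2 x‖ := by
  simp [enorm₂, EuclideanSpace.norm_eq]

lemma enorm₂_eq_sqrt_dotProduct (x : κ → ℝ) : enorm₂ x = √(x ⬝ᵥ x) := by
  simp [enorm₂, dotProduct, sq]

lemma enorm₂_nonneg (x : κ → ℝ) : 0 ≤ enorm₂ x := Real.sqrt_nonneg _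

lemma enorm₂_pos {x : κ → ℝ} (hx : x ≠ 0) : 0 < enorm₂ x := by
  rw [enorm₂_eq_norm_toLp]
  simpa using hx

lemma enorm₂_smul (c : ℝ) (x : κ → ℝ) : enorm₂ (c • x) = |c| * enorm₂ x := by
  rw [enorm₂_eq_norm_toLp, enorm₂_eq_norm_toLp, WithLp.toLp_smul, norm_smul, Real.norm_eq_abs]

lemma enorm₂_mulVec_of_transpose_mul_self [DecidableEq κ] {U : Matrix ι κ ℝ} (hU : Uᵀ * U = 1)
    (x : κ → ℝ) : enorm₂ (U *ᵥ x) = enorm₂ x := by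
  rw [enorm₂_eq_sqrt_dotProduct, enorm₂_eq_sqrt_dotProduct, dotProduct_mulVec, vecMul_mulVec,
    hU, vecMul_one]

lemma enorm₂_mul_mul_transpose_mulVec [DecidableEq κ] {U : Matrix ι κ ℝ} (hU : Uᵀ * U = 1)
    (C : Matrix κ κ ℝ) (W : Matrix μ κ ℝ) (x : μ → ℝ) :
    enorm₂ ((U * C * Wᵀ) *ᵥ x) = enorm₂ (C *ᵥ (Wᵀ *ᵥ x)) := by
  rw [← Matrix.mulVec_mulVec, ← Matrix.mulVec_mulVec, enorm₂_mulVec_of_transpose_mul_self hU]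

variable [DecidableEq κ] [DecidableEq μ]

lemma enorm₂_mulVec_le (A : Matrix ι κ ℝ) (x : κ → ℝ) : enorm₂ (A *ᵥ x) ≤ ‖A‖ * enorm₂ x := by
  simpa [enorm₂_eq_norm_toLp] using A.l2_opNorm_mulVec (WithLp.toLp 2 x)

lemma l2_opNorm_le_of_enorm₂_mulVec_le (A : Matrix ι κ ℝ) {M : ℝ} (hM : 0 ≤ M)
    (h : ∀ x, enorm₂ (A *ᵥ x) ≤ M * enorm₂ x) : ‖A‖ ≤ M := by
  rw [Matrix.l2_opNorm_def]
  refine ContinuousLinearMap.opNorm_le_bound _ hM fun x => ?_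
  have hx := h x.ofLp
  rw [enorm₂_eq_norm_toLp, enorm₂_eq_norm_toLp, WithLp.toLp_ofLp] at hx
  exact hx

lemma l2_opNorm_transpose [DecidableEq ι] (A : Matrix ι κ ℝ) : ‖Aᵀ‖ = ‖A‖ := by
  simpa using A.l2_opNorm_conjTranspose

lemma l2_opNorm_le_one_of_transpose_mul_self {U : Matrix ι κ ℝ} (hU : Uᵀ * U = 1) : ‖U‖ ≤ 1 :=
  l2_opNorm_le_of_enorm₂_mulVec_le U zero_le_one fun x => by
    rw [enorm₂_mulVec_of_transpose_mul_self hU, one_mul]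

lemma l2_opNorm_mul_of_transpose_mul_self [DecidableEq ι] {U : Matrix ι κ ℝ} (hU : Uᵀ * U = 1)
    (A : Matrix κ μ ℝ) : ‖U * A‖ = ‖A‖ := by
  have hU₁ := l2_opNorm_le_one_of_transpose_mul_self hU
  refine le_antisymm ?_ ?_
  · calc ‖U * A‖ ≤ ‖U‖ * ‖A‖ := U.l2_opNorm_mul A
      _ ≤ ‖A‖ := mul_le_of_le_one_left (norm_nonneg _) hU₁
  · calc ‖A‖ = ‖Uᵀ * (U * A)‖ := by rw [← Matrix.mul_assoc, hU, Matrix.one_mul]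
      _ ≤ ‖Uᵀ‖ * ‖U * A‖ := Uᵀ.l2_opNorm_mul _
      _ ≤ ‖U * A‖ := mul_le_of_le_one_left (norm_nonneg _) (by rwa [l2_opNorm_transpose])

lemma l2_opNorm_mul_mul_transpose [DecidableEq ι] {U : Matrix ι κ ℝ} {W : Matrix μ κ ℝ}
    (hU : Uᵀ * U = 1) (hW : Wᵀ * W = 1) (A : Matrix κ κ ℝ) : ‖U * A * Wᵀ‖ = ‖A‖ := by
  rw [Matrix.mul_assoc, l2_opNorm_mul_of_transpose_mul_self hU, ← l2_opNorm_transpose,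
    Matrix.transpose_mul, Matrix.transpose_transpose, l2_opNorm_mul_of_transpose_mul_self hW,
    l2_opNorm_transpose]

end

lemma Matrix.mulVec_injective_of_rank_eq_card {m n K : Type*} [Fintype n] [DecidableEq n]
    [Field K] {A : Matrix m n K} (hA : A.rank = Fintype.card n) : Function.Injective A.mulVec := by
  have h := LinearMap.finrank_range_add_finrank_ker A.mulVecLin
  rw [← Matrix.rank, hA, Module.finrank_fintype_fun_eq_card, Nat.add_eq_left,
    Submodule.finrank_eq_zero, LinearMap.ker_eq_bot] at h
  exact h

open scoped MatrixOrder in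
lemma Matrix.exists_eq_mul_of_mulVec_injective {m n : Type*} [Fintype m] [Fintype n]
    [DecidableEq n] {L : Matrix m n ℝ} (hL : Function.Injective L.mulVec) :
    ∃ (U : Matrix m n ℝ) (S : Matrix n n ℝ), Uᵀ * U = 1 ∧ IsUnit S ∧ L = U * S := by
  obtain ⟨S, hS, hLS⟩ := CStarAlgebra.isStrictlyPositive_iff_eq_star_mul_self.mp
    (Matrix.PosDef.conjTranspose_mul_self L hL).isStrictlyPositive
  rw [Matrix.star_eq_conjTranspose, Matrix.conjTranspose_eq_transpose_of_trivial,
    Matrix.conjTranspose_eq_transpose_of_trivial] at hLS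
  have hSdet := (Matrix.isUnit_iff_isUnit_det S).mp hS
  refine ⟨L * S⁻¹, S, ?_, hS, (Matrix.nonsing_inv_mul_cancel_right _ _ hSdet).symm⟩
  rw [Matrix.transpose_mul, Matrix.mul_assoc, ← Matrix.mul_assoc Lᵀ, hLS,
    Matrix.transpose_nonsing_inv, Matrix.mul_nonsing_inv_cancel_right _ _ hSdet,
    Matrix.nonsing_inv_mul _ (Matrix.isUnit_det_transpose _ hSdet)]

lemma Matrix.mul_inv_gram_mul_inv_gram_mul_transpose {m n p : Type*} [Fintype m] [Fintype n]
    [Fintype p] [DecidableEq n] {U : Matrix m n ℝ} {W : Matrix p n ℝ} {S T : Matrix n n ℝ}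
    (hU : Uᵀ * U = 1) (hW : Wᵀ * W = 1) (hS : IsUnit S) (hT : IsUnit T) :
    U * S * ((U * S)ᵀ * (U * S))⁻¹ * ((W * T)ᵀ * (W * T))⁻¹ * (W * T)ᵀ =
      U * (S * Tᵀ)⁻¹ᵀ * Wᵀ := by
  have hUS : (U * S)ᵀ * (U * S) = Sᵀ * S := by
    rw [Matrix.transpose_mul, Matrix.mul_assoc, ← Matrix.mul_assoc Uᵀ, hU, Matrix.one_mul]
  have hWT : (W * T)ᵀ * (W * T) = Tᵀ * T := by
    rw [Matrix.transpose_mul, Matrix.mul_assoc, ← Matrix.mul_assoc Wᵀ, hW, Matrix.one_mul]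
  have hS' := (Matrix.isUnit_iff_isUnit_det S).mp hS
  have hT' := Matrix.isUnit_det_transpose _ ((Matrix.isUnit_iff_isUnit_det T).mp hT)
  rw [hUS, hWT]
  simp only [Matrix.mul_inv_rev, Matrix.transpose_mul, Matrix.transpose_nonsing_inv,
    Matrix.transpose_transpose, Matrix.mul_assoc, Matrix.mul_nonsing_inv_cancel_left _ _ hS',
    Matrix.nonsing_inv_mul_cancel_left _ _ hT']

lemma Submodule.exists_ne_zero_apply_eq_smul {K E F : Type*} [Field K] [AddCommGroup E]
    [Module K E] [FiniteDimensional K E] [AddCommGroup F] [Module K F] [FiniteDimensional K F]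
    (f : E →ₗ[K] F) (V : Submodule K E) (hV : Module.finrank K V = Module.finrank K F)
    {y : F} (hy : y ≠ 0) : ∃ x ∈ V, x ≠ 0 ∧ ∃ c : K, f x = c • y := by
  by_cases hinj : Function.Injective (f.domRestrict V)
  · obtain ⟨⟨x, hxV⟩, hxy⟩ := (LinearMap.injective_iff_surjective_of_finrank_eq_finrank hV).mp
      hinj y
    refine ⟨x, hxV, ?_, 1, by simpa using hxy⟩
    rintro rfl
    exact hy (by simpa using hxy.symm)
  · rw [← LinearMap.ker_eq_bot] at hinj
    obtain ⟨⟨x, hxV⟩, hker, hx⟩ := Submodule.exists_mem_ne_zero_of_ne_bot hinj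
    exact ⟨x, hxV, by simpa using hx, 0, by simpa using hker⟩

section
variable {ι κ μ : Type*} [Fintype ι] [Fintype κ] [Fintype μ]

lemma sval_one_eq_sSup (A : Matrix ι κ ℝ) :
    sval A 1 = sSup {t : ℝ | ∃ x ≠ 0, t * enorm₂ x ≤ enorm₂ (A *ᵥ x)} := by
  rw [sval]
  congr 1
  ext t
  constructor
  · rintro ⟨V, hV, hVt⟩
    obtain ⟨x, hxV, hx⟩ := Submodule.exists_mem_ne_zero_of_ne_bot
      (Submodule.one_le_finrank_iff.mp hV.ge)
    exact ⟨x, hx, hVt x hxV⟩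
  · rintro ⟨x, hx, hxt⟩
    refine ⟨Submodule.span ℝ {x}, finrank_span_singleton hx, fun y hy => ?_⟩
    obtain ⟨c, rfl⟩ := Submodule.mem_span_singleton.mp hy
    rw [Matrix.mulVec_smul, enorm₂_smul, enorm₂_smul, mul_left_comm]
    exact mul_le_mul_of_nonneg_left hxt (abs_nonneg c)

lemma sval_card_eq_sSup (A : Matrix ι κ ℝ) :
    sval A (Fintype.card κ) = sSup {t : ℝ | ∀ y, t * enorm₂ y ≤ enorm₂ (A *ᵥ y)} := by
  rw [sval]
  congr 1
  ext t
  constructor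
  · rintro ⟨V, hV, hVt⟩
    rw [← Module.finrank_fintype_fun_eq_card (R := ℝ)] at hV
    exact fun y => hVt y (Submodule.eq_top_of_finrank_eq hV ▸ Submodule.mem_top)
  · exact fun h => ⟨⊤, by simp, fun y _ => h y⟩

variable [DecidableEq κ] [DecidableEq μ]

lemma sval_one_eq_l2_opNorm (A : Matrix ι κ ℝ) : sval A 1 = ‖A‖ := by
  rw [sval_one_eq_sSup]
  set S := {t : ℝ | ∃ x ≠ 0, t * enorm₂ x ≤ enorm₂ (A *ᵥ x)}
  rcases isEmpty_or_nonempty κ with hκ | hκ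
  · have hS : S = ∅ := Set.eq_empty_of_forall_notMem fun t ⟨x, hx, _⟩ => hx (Subsingleton.elim _ _)
    rw [hS, Real.sSup_empty, Subsingleton.elim A 0, norm_zero]
  have hbdd : ∀ t ∈ S, t ≤ ‖A‖ := by
    rintro t ⟨x, hx, hxt⟩
    exact le_of_mul_le_mul_right (hxt.trans (enorm₂_mulVec_le A x)) (enorm₂_pos hx)
  have hratio : ∀ x ≠ 0, enorm₂ (A *ᵥ x) / enorm₂ x ∈ S := fun x hx =>
    ⟨x, hx, (div_mul_cancel₀ _ (enorm₂_pos hx).ne').le⟩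
  have hzero : (0 : ℝ) ∈ S := by
    obtain ⟨x, hx⟩ := exists_ne (0 : κ → ℝ)
    exact ⟨x, hx, by rw [zero_mul]; exact enorm₂_nonneg _⟩
  refine le_antisymm (csSup_le ⟨0, hzero⟩ hbdd)
    (l2_opNorm_le_of_enorm₂_mulVec_le A (le_csSup ⟨_, hbdd⟩ hzero) fun x => ?_)
  rcases eq_or_ne x 0 with rfl | hx
  · simp [enorm₂]
  calc enorm₂ (A *ᵥ x) = enorm₂ (A *ᵥ x) / enorm₂ x * enorm₂ x :=
        (div_mul_cancel₀ _ (enorm₂_pos hx).ne').symm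
    _ ≤ sSup S * enorm₂ x :=
        mul_le_mul_of_nonneg_right (le_csSup ⟨_, hbdd⟩ (hratio x hx)) (enorm₂_nonneg _)

/- A nonzero `x ∈ V` with `Wᵀ x = c • y` exists by counting dimensions; since `Wᵀ` is a
contraction, `|c| ‖y‖ ≤ ‖x‖`, while `‖U C Wᵀ x‖ = |c| ‖C y‖`. -/
lemma mul_enorm₂_le_of_mul_mul_transpose {U : Matrix ι κ ℝ} {W : Matrix μ κ ℝ}
    (hU : Uᵀ * U = 1) (hW : Wᵀ * W = 1) {C : Matrix κ κ ℝ} {t : ℝ} {V : Submodule ℝ (μ → ℝ)}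
    (hV : Module.finrank ℝ V = Fintype.card κ)
    (hVt : ∀ x ∈ V, t * enorm₂ x ≤ enorm₂ ((U * C * Wᵀ) *ᵥ x)) (y : κ → ℝ) :
    t * enorm₂ y ≤ enorm₂ (C *ᵥ y) := by
  rcases eq_or_ne y 0 with rfl | hy
  · simp [enorm₂]
  rw [← Module.finrank_fintype_fun_eq_card (R := ℝ)] at hV
  obtain ⟨x, hxV, hx, c, hxy⟩ := Submodule.exists_ne_zero_apply_eq_smul Wᵀ.mulVecLin V hV hy
  rw [Matrix.mulVecLin_apply] at hxy
  have hCx : t * enorm₂ x ≤ |c| * enorm₂ (C *ᵥ y) := by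
    simpa [enorm₂_mul_mul_transpose_mulVec hU, hxy, Matrix.mulVec_smul, enorm₂_smul] using
      hVt x hxV
  have hWx : |c| * enorm₂ y ≤ enorm₂ x := by
    calc |c| * enorm₂ y = enorm₂ (Wᵀ *ᵥ x) := by rw [hxy, enorm₂_smul]
      _ ≤ ‖Wᵀ‖ * enorm₂ x := enorm₂_mulVec_le _ _
      _ ≤ enorm₂ x := mul_le_of_le_one_left (enorm₂_nonneg _)
          (by rw [l2_opNorm_transpose]; exact l2_opNorm_le_one_of_transpose_mul_self hW)
  rcases le_or_gt t 0 with ht | ht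
  · exact (mul_nonpos_of_nonpos_of_nonneg ht (enorm₂_nonneg _)).trans (enorm₂_nonneg _)
  have hc : 0 < |c| := by
    by_contra! hc
    have := hCx.trans (mul_nonpos_of_nonpos_of_nonneg hc (enorm₂_nonneg _))
    exact (mul_pos ht (enorm₂_pos hx)).not_ge this
  refine le_of_mul_le_mul_left ?_ hc
  calc |c| * (t * enorm₂ y) = t * (|c| * enorm₂ y) := mul_left_comm _ _ _
    _ ≤ t * enorm₂ x := mul_le_mul_of_nonneg_left hWx ht.le
    _ ≤ |c| * enorm₂ (C *ᵥ y) := hCx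

lemma sval_card_mul_mul_transpose {U : Matrix ι κ ℝ} {W : Matrix μ κ ℝ}
    (hU : Uᵀ * U = 1) (hW : Wᵀ * W = 1) (C : Matrix κ κ ℝ) :
    sval (U * C * Wᵀ) (Fintype.card κ) = sval C (Fintype.card κ) := by
  rw [sval_card_eq_sSup C, sval]
  congr 1
  ext t
  refine ⟨fun ⟨V, hV, hVt⟩ => mul_enorm₂_le_of_mul_mul_transpose hU hW hV hVt, fun h => ?_⟩
  have hWW (y : κ → ℝ) : Wᵀ *ᵥ (W *ᵥ y) = y := by
    rw [Matrix.mulVec_mulVec, hW, Matrix.one_mulVec]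
  have hWinj : Function.Injective W.mulVecLin := Function.LeftInverse.injective hWW
  refine ⟨LinearMap.range W.mulVecLin, ?_, ?_⟩
  · rw [LinearMap.finrank_range_of_inj hWinj, Module.finrank_fintype_fun_eq_card]
  · rintro _ ⟨y, rfl⟩
    rw [Matrix.mulVecLin_apply, enorm₂_mul_mul_transpose_mulVec hU, hWW,
      enorm₂_mulVec_of_transpose_mul_self hW]
    exact h y

lemma sval_card_eq_inv_l2_opNorm_inv {C : Matrix κ κ ℝ} (hC : IsUnit C) :
    sval C (Fintype.card κ) = ‖C⁻¹‖⁻¹ := by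
  rw [sval_card_eq_sSup]
  rcases isEmpty_or_nonempty κ with hκ | hκ
  · have hS : {t : ℝ | ∀ y, t * enorm₂ y ≤ enorm₂ (C *ᵥ y)} = Set.univ :=
      Set.eq_univ_of_forall fun t y => by simp [Subsingleton.elim y 0, enorm₂]
    rw [hS, Real.sSup_univ, Subsingleton.elim C⁻¹ 0, norm_zero, _root_.inv_zero]
  have hC' := (Matrix.isUnit_iff_isUnit_det C).mp hC
  have hCinv (z : κ → ℝ) : C *ᵥ (C⁻¹ *ᵥ z) = z := by
    rw [Matrix.mulVec_mulVec, Matrix.mul_nonsing_inv _ hC', Matrix.one_mulVec]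
  have hnorm : 0 < ‖C⁻¹‖ := by
    refine norm_pos_iff.mpr fun h => one_ne_zero (α := Matrix κ κ ℝ) ?_
    rw [← Matrix.mul_nonsing_inv _ hC', h, Matrix.mul_zero]
  have hS : {t : ℝ | ∀ y, t * enorm₂ y ≤ enorm₂ (C *ᵥ y)} = Set.Iic ‖C⁻¹‖⁻¹ := by
    ext t
    refine ⟨fun h => ?_, fun ht y => ?_⟩
    · rcases le_or_gt t 0 with ht | ht
      · exact ht.trans (inv_nonneg.mpr hnorm.le)
      refine (le_inv_comm₀ ht hnorm).mpr (l2_opNorm_le_of_enorm₂_mulVec_le _ (inv_nonneg.mpr ht.le)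
        fun z => ?_)
      rw [inv_mul_eq_div, le_div_iff₀ ht, mul_comm]
      simpa [hCinv] using h (C⁻¹ *ᵥ z)
    · have : enorm₂ y ≤ ‖C⁻¹‖ * enorm₂ (C *ᵥ y) := by
        simpa [Matrix.mulVec_mulVec, Matrix.nonsing_inv_mul _ hC'] using
          enorm₂_mulVec_le C⁻¹ (C *ᵥ y)
      calc t * enorm₂ y ≤ ‖C⁻¹‖⁻¹ * enorm₂ y := mul_le_mul_of_nonneg_right ht (enorm₂_nonneg _)
        _ ≤ enorm₂ (C *ᵥ y) := (inv_mul_le_iff₀ hnorm).mpr this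
  rw [hS, csSup_Iic]
end

/-- Stmt 6: for full column rank L, R, ‖L(LᵀL)⁻¹(RᵀR)⁻¹Rᵀ‖ = 1/σ_r(LRᵀ). -/
theorem stmt6 (n₁ n₂ r : ℕ)
    (L : Matrix (Fin n₁) (Fin r) ℝ) (R : Matrix (Fin n₂) (Fin r) ℝ)
    (hL : L.rank = r) (hR : R.rank = r) :
    spec (L * (Lᵀ * L)⁻¹ * (Rᵀ * R)⁻¹ * Rᵀ) = 1 / sval (L * Rᵀ) r := by
  obtain ⟨U, S, hU, hS, rfl⟩ := Matrix.exists_eq_mul_of_mulVec_injective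
    (Matrix.mulVec_injective_of_rank_eq_card (hL.trans (Fintype.card_fin r).symm))
  obtain ⟨W, T, hW, hT, rfl⟩ := Matrix.exists_eq_mul_of_mulVec_injective
    (Matrix.mulVec_injective_of_rank_eq_card (hR.trans (Fintype.card_fin r).symm))
  have hST : IsUnit (S * Tᵀ) := hS.mul ((Matrix.isUnit_transpose T).mpr hT)
  have hsval := (sval_card_mul_mul_transpose hU hW (S * Tᵀ)).trans
    (sval_card_eq_inv_l2_opNorm_inv hST)
  rw [Fintype.card_fin] at hsval
  rw [spec, Matrix.mul_inv_gram_mul_inv_gram_mul_transpose hU hW hS hT, sval_one_eq_l2_opNorm,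
    l2_opNorm_mul_mul_transpose hU hW, l2_opNorm_transpose, Matrix.transpose_mul,
    ← Matrix.mul_assoc, Matrix.mul_assoc U, hsval, one_div, inv_inv]
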